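/- Let ν be a Lévy measure on ℝ^d satisfying: there exist C > 0, α ∈ (0,2), c₀ > 0 such that ∫_{{|⟨z,k⟩| ≤ 1}} ⟨z,k⟩² ν(dz) ≥ C|k|^α for all k ∈ ℝ^d with |k| ≥ c₀. Let A be an n×n matrix and B an n×d matrix satisfying the rank condition Rank[B, AB, ..., A^{n-1}B] = n. Then for every t > 0 there exist constants a_t > 0 and b_t ∈ ℝ such that for all y ∈ ℝ^n with |y| ≥ 1: ∫₀ᵗ ∫_{ℝ^d} (1 − cos⟨B* e^{s A*} y, z⟩) ν(dz) ds ≥ a_t |y|^α − b_t. -/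

import Mathlib

/-!
For `|x| ≤ 1` one has `1 - cos x ≥ (2/π²) x²`, so the hypothesis on `ν` gives
`∫ (1 - cos ⟪k, z⟫) dν ≥ (2/π²) C (‖k‖^α - c₀^α)` for every `k`. With `k = B* e^{sA*} y` it remains
to bound `∫₀ᵗ ‖B* e^{sA*} y‖^α ds` from below by a multiple of `‖y‖^α`.

Differentiating `s ↦ B* e^{sA*} y` repeatedly and using the rank condition shows that it vanishes on
`(0, t)` only for `y = 0`; by compactness of the unit sphere the controllability Gramian is then
coercive, `∫₀ᵗ ‖B* e^{sA*} y‖² ds ≥ c ‖y‖²`. Since `‖B* e^{sA*} y‖ ≤ K ‖y‖` on `[0, t]` and `α ≤ 2`,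
the pointwise bound `x^α ≥ x² (K ‖y‖)^(α-2)` for `x ≤ K ‖y‖` turns this into
`∫₀ᵗ ‖B* e^{sA*} y‖^α ds ≥ c K^(α-2) ‖y‖^α`.
-/

open MeasureTheory Matrix RealInnerProductSpace Real Set NormedSpace

theorem rpow_eq_sq_mul_rpow_sub_two {x : ℝ} (hx : x ≠ 0) (α : ℝ) :
    x ^ α = x ^ 2 * x ^ (α - 2) := by
  rw [mul_comm, ← rpow_add_natCast hx]; norm_num

theorem sq_mul_rpow_sub_two_le_rpow {x R α : ℝ} (hx : 0 ≤ x) (hxR : x ≤ R) (hα : α ≤ 2) :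
    x ^ 2 * R ^ (α - 2) ≤ x ^ α := by
  rcases hx.eq_or_lt with rfl | hx
  · simpa using rpow_nonneg le_rfl α
  rw [rpow_eq_sq_mul_rpow_sub_two hx.ne']
  gcongr ?_ * ?_
  exact rpow_le_rpow_of_nonpos hx hxR (by linarith)

theorem ofReal_integral_le_lintegral_ofReal {α : Type*} [MeasurableSpace α] {μ : Measure α}
    {f : α → ℝ} (hf : Integrable f μ) :
    ENNReal.ofReal (∫ x, f x ∂μ) ≤ ∫⁻ x, ENNReal.ofReal (f x) ∂μ := by
  rw [integral_eq_lintegral_pos_part_sub_lintegral_neg_part hf]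
  exact (ENNReal.ofReal_le_ofReal (sub_le_self _ ENNReal.toReal_nonneg)).trans
    ENNReal.ofReal_toReal_le

section LevyMeasure

variable {F : Type*} [NormedAddCommGroup F] [InnerProductSpace ℝ F] [MeasurableSpace F]
  [OpensMeasurableSpace F] (ν : Measure F)

theorem setLIntegral_inner_sq_le_lintegral_one_sub_cos (k : F) :
    ∫⁻ z in {z | |⟪z, k⟫| ≤ 1}, ENNReal.ofReal (2 / π ^ 2 * ⟪z, k⟫ ^ 2) ∂ν ≤
      ∫⁻ z, ENNReal.ofReal (1 - cos ⟪k, z⟫) ∂ν := by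
  have hS : MeasurableSet {z : F | |⟪z, k⟫| ≤ 1} :=
    (isClosed_le (by fun_prop) continuous_const).measurableSet
  refine (setLIntegral_mono' hS fun z hz => ENNReal.ofReal_le_ofReal ?_).trans
    (setLIntegral_le_lintegral _ _)
  rw [mem_ofPred_eq, real_inner_comm] at hz
  rw [real_inner_comm]
  linarith [cos_le_one_sub_mul_cos_sq (hz.trans (by linarith [pi_gt_three]))]

theorem ofReal_mul_rpow_sub_le_lintegral_one_sub_cos {C α c₀ : ℝ} (hC : 0 ≤ C) (hα : 0 ≤ α)
    (hc₀ : 0 ≤ c₀) (hcond : ∀ k : F, c₀ ≤ ‖k‖ →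
      ENNReal.ofReal (C * ‖k‖ ^ α) ≤ ∫⁻ z in {z | |⟪z, k⟫| ≤ 1}, ENNReal.ofReal (⟪z, k⟫ ^ 2) ∂ν)
    (k : F) :
    ENNReal.ofReal (2 / π ^ 2 * C * (‖k‖ ^ α - c₀ ^ α)) ≤
      ∫⁻ z, ENNReal.ofReal (1 - cos ⟪k, z⟫) ∂ν := by
  rcases lt_or_ge ‖k‖ c₀ with hk | hk
  · rw [ENNReal.ofReal_of_nonpos]
    · exact zero_le
    · have := rpow_le_rpow (norm_nonneg k) hk.le hα
      exact mul_nonpos_of_nonneg_of_nonpos (by positivity) (by linarith)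
  calc ENNReal.ofReal (2 / π ^ 2 * C * (‖k‖ ^ α - c₀ ^ α))
      ≤ ENNReal.ofReal (2 / π ^ 2) * ENNReal.ofReal (C * ‖k‖ ^ α) := by
        rw [← ENNReal.ofReal_mul (by positivity)]
        refine ENNReal.ofReal_le_ofReal ?_
        nlinarith [rpow_nonneg hc₀ α, show 0 ≤ 2 / π ^ 2 * C by positivity]
    _ ≤ ENNReal.ofReal (2 / π ^ 2) *
          ∫⁻ z in {z | |⟪z, k⟫| ≤ 1}, ENNReal.ofReal (⟪z, k⟫ ^ 2) ∂ν := by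
        gcongr; exact hcond k hk
    _ = ∫⁻ z in {z | |⟪z, k⟫| ≤ 1}, ENNReal.ofReal (2 / π ^ 2 * ⟪z, k⟫ ^ 2) ∂ν := by
        rw [← lintegral_const_mul' _ _ ENNReal.ofReal_ne_top]
        simp_rw [← ENNReal.ofReal_mul (by positivity : (0:ℝ) ≤ 2 / π ^ 2)]
    _ ≤ _ := setLIntegral_inner_sq_le_lintegral_one_sub_cos ν k

end LevyMeasure

section Observability

variable {E F : Type*} [NormedAddCommGroup E] [NormedSpace ℝ E] [FiniteDimensional ℝ E]
  [NormedAddCommGroup F] [NormedSpace ℝ F]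

theorem exists_pos_mul_sq_norm_le_of_continuous {q : E → ℝ} (hq : Continuous q)
    (hpos : ∀ u ≠ 0, 0 < q u) (hhom : ∀ (r : ℝ) u, q (r • u) = r ^ 2 * q u) :
    ∃ c > 0, ∀ u, c * ‖u‖ ^ 2 ≤ q u := by
  have hq0 : q 0 = 0 := by simpa using hhom 0 0
  cases subsingleton_or_nontrivial E
  · exact ⟨1, one_pos, fun u => by simp [Subsingleton.elim u 0, hq0]⟩
  obtain ⟨u₀, hu₀, hmin⟩ := (isCompact_sphere (0 : E) 1).exists_isMinOn
    (NormedSpace.sphere_nonempty.2 zero_le_one) hq.continuousOn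
  have hu₀ : ‖u₀‖ = 1 := by simpa using hu₀
  refine ⟨q u₀, hpos u₀ (norm_ne_zero_iff.1 (by simp [hu₀])), fun u => ?_⟩
  rcases eq_or_ne u 0 with rfl | hu
  · simp [hq0]
  have hv : ‖u‖⁻¹ • u ∈ Metric.sphere (0 : E) 1 := by
    simp [norm_smul, inv_mul_cancel₀ (norm_ne_zero_iff.2 hu)]
  calc q u₀ * ‖u‖ ^ 2 ≤ q (‖u‖⁻¹ • u) * ‖u‖ ^ 2 := by gcongr; exact hmin hv
    _ = q u := by
      rw [mul_comm, ← hhom, smul_smul, mul_inv_cancel₀ (norm_ne_zero_iff.2 hu), one_smul]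

theorem exists_pos_mul_sq_norm_le_setIntegral_sq_norm {L : ℝ → E →L[ℝ] F} (hL : Continuous L)
    {t : ℝ} (hobs : ∀ u ≠ 0, ∃ s ∈ Ioo 0 t, L s u ≠ 0) :
    ∃ c > 0, ∀ u, c * ‖u‖ ^ 2 ≤ ∫ s in Ioc 0 t, ‖L s u‖ ^ 2 := by
  have hcont : ∀ u, Continuous fun s => ‖L s u‖ ^ 2 := fun u => by fun_prop
  simp_rw [← integral_Icc_eq_integral_Ioc]
  refine exists_pos_mul_sq_norm_le_of_continuous
    (continuous_parametric_integral_of_continuous (by fun_prop) isCompact_Icc) ?_ ?_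
  · intro u hu
    obtain ⟨s₀, hs₀, hLs₀⟩ := hobs u hu
    rw [setIntegral_pos_iff_support_of_nonneg_ae (ae_of_all _ fun s => by positivity)
      ((hcont u).integrableOn_Icc)]
    refine lt_of_lt_of_le ?_ (measure_mono (inter_subset_inter_right _ Ioo_subset_Icc_self))
    exact ((hcont u).isOpen_support.inter isOpen_Ioo).measure_pos volume
      ⟨s₀, by simpa using hLs₀, hs₀⟩
  · intro r u
    simp_rw [map_smul, norm_smul, mul_pow, norm_eq_abs, sq_abs, integral_const_mul]

theorem exists_pos_mul_rpow_norm_le_setIntegral_rpow_norm {L : ℝ → E →L[ℝ] F}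
    (hL : Continuous L) {t : ℝ} (hobs : ∀ u ≠ 0, ∃ s ∈ Ioo 0 t, L s u ≠ 0) {α : ℝ}
    (hα : α ∈ Ioo 0 2) :
    ∃ a > 0, ∀ u, a * ‖u‖ ^ α ≤ ∫ s in Ioc 0 t, ‖L s u‖ ^ α := by
  obtain ⟨c, hc, hgram⟩ := exists_pos_mul_sq_norm_le_setIntegral_sq_norm hL hobs
  obtain ⟨K, hK⟩ := (isCompact_Icc (a := 0) (b := t)).exists_bound_of_continuousOn
    hL.continuousOn
  set K' := max K 1
  have hK' : 0 < K' := lt_max_of_lt_right one_pos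
  refine ⟨c * K' ^ (α - 2), by positivity, fun u => ?_⟩
  rcases eq_or_ne u 0 with rfl | hu
  · simp [zero_rpow hα.1.ne']
  have hu' : 0 < ‖u‖ := norm_pos_iff.2 hu
  have hbound : ∀ s ∈ Ioc 0 t, ‖L s u‖ ≤ K' * ‖u‖ := fun s hs =>
    (L s).le_of_opNorm_le ((hK s (Ioc_subset_Icc_self hs)).trans (le_max_left _ _)) u
  calc c * K' ^ (α - 2) * ‖u‖ ^ α = c * ‖u‖ ^ 2 * (K' * ‖u‖) ^ (α - 2) := by
        rw [mul_rpow hK'.le hu'.le, rpow_eq_sq_mul_rpow_sub_two hu'.ne']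
        ring
    _ ≤ (∫ s in Ioc 0 t, ‖L s u‖ ^ 2) * (K' * ‖u‖) ^ (α - 2) := by gcongr; exact hgram u
    _ ≤ ∫ s in Ioc 0 t, ‖L s u‖ ^ α := by
      rw [← integral_mul_const]
      refine setIntegral_mono_on ?_ ?_ measurableSet_Ioc fun s hs =>
        sq_mul_rpow_sub_two_le_rpow (norm_nonneg _) (hbound s hs) hα.2.le
      · exact Continuous.integrableOn_Ioc (by fun_prop)
      · exact Continuous.integrableOn_Ioc
          ((by fun_prop : Continuous fun s => ‖L s u‖).rpow_const fun _ => Or.inr hα.1.le)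

end Observability

section LevySymbol

variable {E F : Type*} [NormedAddCommGroup E] [NormedSpace ℝ E] [FiniteDimensional ℝ E]
  [NormedAddCommGroup F] [InnerProductSpace ℝ F] [MeasurableSpace F] [OpensMeasurableSpace F]

theorem exists_ofReal_mul_rpow_sub_le_lintegral_one_sub_cos (ν : Measure F)
    {L : ℝ → E →L[ℝ] F} (hL : Continuous L) {t : ℝ} (hobs : ∀ u ≠ 0, ∃ s ∈ Ioo 0 t, L s u ≠ 0)
    {C α c₀ : ℝ} (hC : 0 < C) (hα : α ∈ Ioo 0 2) (hc₀ : 0 ≤ c₀)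
    (hcond : ∀ k : F, c₀ ≤ ‖k‖ →
      ENNReal.ofReal (C * ‖k‖ ^ α) ≤ ∫⁻ z in {z | |⟪z, k⟫| ≤ 1}, ENNReal.ofReal (⟪z, k⟫ ^ 2) ∂ν) :
    ∃ a b : ℝ, 0 < a ∧ ∀ u, ENNReal.ofReal (a * ‖u‖ ^ α - b) ≤
      ∫⁻ s in Ioc 0 t, ∫⁻ z, ENNReal.ofReal (1 - cos ⟪L s u, z⟫) ∂ν := by
  obtain ⟨a, ha, hobsα⟩ := exists_pos_mul_rpow_norm_le_setIntegral_rpow_norm hL hobs hα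
  set κ := 2 / π ^ 2 * C
  refine ⟨κ * a, κ * ∫ _ in Ioc 0 t, c₀ ^ α, by positivity, fun u => ?_⟩
  have hintα : IntegrableOn (fun s => ‖L s u‖ ^ α) (Ioc 0 t) :=
    Continuous.integrableOn_Ioc
      ((by fun_prop : Continuous fun s => ‖L s u‖).rpow_const fun _ => Or.inr hα.1.le)
  have hint := hintα.sub (Continuous.integrableOn_Ioc (continuous_const (y := c₀ ^ α)))
  calc ENNReal.ofReal (κ * a * ‖u‖ ^ α - κ * ∫ _ in Ioc 0 t, c₀ ^ α)
      ≤ ENNReal.ofReal (∫ s in Ioc 0 t, κ * (‖L s u‖ ^ α - c₀ ^ α)) := by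
        refine ENNReal.ofReal_le_ofReal ?_
        rw [integral_const_mul, integral_sub hintα (Continuous.integrableOn_Ioc continuous_const)]
        nlinarith [hobsα u, show 0 < κ by positivity]
    _ ≤ ∫⁻ s in Ioc 0 t, ENNReal.ofReal (κ * (‖L s u‖ ^ α - c₀ ^ α)) :=
        ofReal_integral_le_lintegral_ofReal (hint.const_mul κ)
    _ ≤ _ := lintegral_mono fun s =>
        ofReal_mul_rpow_sub_le_lintegral_one_sub_cos ν hC.le hα.1.le hc₀ hcond (L s u)

end LevySymbol

theorem Matrix.eq_zero_of_vecMul_eq_zero_of_rank_eq {K m ι : Type*} [Field K] [Fintype m]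
    [Fintype ι] {M : Matrix m ι K} (hM : M.rank = Fintype.card m) {v : m → K}
    (hv : v ᵥ* M = 0) : v = 0 := by
  have hker := LinearMap.finrank_range_add_finrank_ker Mᵀ.mulVecLin
  rw [← Matrix.rank, rank_transpose, hM, Module.finrank_fintype_fun_eq_card] at hker
  have hv' : v ∈ LinearMap.ker Mᵀ.mulVecLin := by simpa [mulVec_transpose] using hv
  rwa [Submodule.finrank_eq_zero.1 (by omega : Module.finrank K (LinearMap.ker Mᵀ.mulVecLin) = 0),
    Submodule.mem_bot] at hv'

section MatrixExponential

variable {m n : Type*} [Fintype m] [Fintype n] [DecidableEq n]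

theorem Matrix.continuous_exp_smul (X : Matrix n n ℝ) : Continuous fun s : ℝ => exp (s • X) := by
  let : NormedRing (Matrix n n ℝ) := Matrix.linftyOpNormedRing
  let : NormedAlgebra ℝ (Matrix n n ℝ) := Matrix.linftyOpNormedAlgebra
  exact continuous_iff_continuousAt.2 fun s => (hasDerivAt_exp_smul_const' X s).continuousAt

theorem Matrix.mul_mul_exp_smul_mulVec_eq_zero {U : Set ℝ} (hU : IsOpen U) (P : Matrix m n ℝ)
    (X : Matrix n n ℝ) {u : n → ℝ} (h : ∀ s ∈ U, (P * exp (s • X)) *ᵥ u = 0) :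
    ∀ s ∈ U, (P * X * exp (s • X)) *ᵥ u = 0 := by
  let : NormedRing (Matrix n n ℝ) := Matrix.linftyOpNormedRing
  let : NormedAlgebra ℝ (Matrix n n ℝ) := Matrix.linftyOpNormedAlgebra
  intro s hs
  let T : Matrix n n ℝ →L[ℝ] (m → ℝ) :=
    LinearMap.toContinuousLinearMap ((mulVecBilin ℝ ℝ).flip u ∘ₗ mulLeftLinearMap n ℝ P)
  have hderiv : HasDerivAt (fun r : ℝ => T (exp (r • X))) (T (X * exp (s • X))) s :=
    T.hasFDerivAt.comp_hasDerivAt s (hasDerivAt_exp_smul_const' X s)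
  have hzero : (fun r : ℝ => T (exp (r • X))) =ᶠ[nhds s] fun _ => 0 :=
    Filter.mem_of_superset (hU.mem_nhds hs) fun r hr => by simpa [T] using h r hr
  simpa [T, Matrix.mul_assoc] using
    hderiv.unique ((hasDerivAt_const s 0).congr_of_eventuallyEq hzero)

end MatrixExponential

section KalmanRankCondition

variable {n : ℕ} {ι : Type*} [Fintype ι] (A : Matrix (Fin n) (Fin n) ℝ) (B : Matrix (Fin n) ι ℝ)

theorem Matrix.eq_zero_of_forall_mul_exp_smul_mulVec_eq_zero
    (hrank : (Matrix.of fun (i : Fin n) (jk : Fin n × ι) => (A ^ (jk.1 : ℕ) * B) i jk.2).rank = n)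
    {U : Set ℝ} (hU : IsOpen U) (hne : U.Nonempty) {u : Fin n → ℝ}
    (h : ∀ s ∈ U, (Bᵀ * exp (s • Aᵀ)) *ᵥ u = 0) : u = 0 := by
  have hpow : ∀ k : ℕ, ∀ s ∈ U, (Bᵀ * Aᵀ ^ k * exp (s • Aᵀ)) *ᵥ u = 0 := by
    intro k
    induction k with
    | zero => simpa using h
    | succ k ih =>
      simpa [pow_succ, Matrix.mul_assoc] using
        mul_mul_exp_smul_mulVec_eq_zero hU (Bᵀ * Aᵀ ^ k) Aᵀ ih
  obtain ⟨s, hs⟩ := hne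
  have hv : exp (s • Aᵀ) *ᵥ u = 0 := by
    refine eq_zero_of_vecMul_eq_zero_of_rank_eq (hrank.trans (Fintype.card_fin n).symm) ?_
    funext jk
    have hjk := congrFun (hpow jk.1 s hs) jk.2
    rw [← mulVec_mulVec, ← transpose_pow, ← transpose_mul, mulVec_transpose] at hjk
    simpa [vecMul] using hjk
  exact mulVec_injective_of_isUnit (isUnit_exp _) (by simpa using hv)

theorem Matrix.exists_toEuclideanLin_mul_exp_smul_ne_zero
    (hrank : (Matrix.of fun (i : Fin n) (jk : Fin n × ι) => (A ^ (jk.1 : ℕ) * B) i jk.2).rank = n)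
    {t : ℝ} (ht : 0 < t) {u : EuclideanSpace ℝ (Fin n)} (hu : u ≠ 0) :
    ∃ s ∈ Ioo 0 t, toEuclideanLin (Bᵀ * exp (s • Aᵀ)) u ≠ 0 := by
  by_contra! h
  refine hu (WithLp.ofLp_injective 2 ?_)
  exact eq_zero_of_forall_mul_exp_smul_mulVec_eq_zero A B hrank isOpen_Ioo (nonempty_Ioo.2 ht)
    fun s hs => by simpa [toLpLin_apply] using h s hs

theorem Matrix.continuous_toEuclideanLin_mul_exp_smul :
    Continuous fun s : ℝ => LinearMap.toContinuousLinearMap (toEuclideanLin (Bᵀ * exp (s • Aᵀ))) :=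
  ((toEuclideanLin (𝕜 := ℝ) (m := ι) (n := Fin n)).trans
    LinearMap.toContinuousLinearMap).toLinearMap.continuous_of_finiteDimensional.comp
    (continuous_const.matrix_mul (continuous_exp_smul Aᵀ))

end KalmanRankCondition

theorem lower_bound_for_levy_symbol_general
    (n d : ℕ) (ν : Measure (EuclideanSpace ℝ (Fin d)))
    (C : ℝ) (hC : 0 < C) (α : ℝ) (hα : α ∈ Set.Ioo (0:ℝ) 2)
    (c₀ : ℝ) (hc₀ : 0 < c₀)
    (hcond : ∀ k : EuclideanSpace ℝ (Fin d), c₀ ≤ ‖k‖ →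
      ENNReal.ofReal (C * ‖k‖ ^ α) ≤
        ∫⁻ z in {z | |⟪z, k⟫| ≤ 1}, ENNReal.ofReal (⟪z, k⟫ ^ 2) ∂ν)
    (A : Matrix (Fin n) (Fin n) ℝ) (B : Matrix (Fin n) (Fin d) ℝ)
    (hrank : (Matrix.of fun (i : Fin n) (jk : Fin n × Fin d) =>
        (A ^ (jk.1 : ℕ) * B) i jk.2).rank = n) :
    ∀ t : ℝ, 0 < t → ∃ a b : ℝ, 0 < a ∧
      ∀ y : EuclideanSpace ℝ (Fin n), 1 ≤ ‖y‖ →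
        ENNReal.ofReal (a * ‖y‖ ^ α - b) ≤
          ∫⁻ s in Set.Ioc (0:ℝ) t,
            ∫⁻ z, ENNReal.ofReal
              (1 - Real.cos ⟪Matrix.toEuclideanLin (Bᵀ * NormedSpace.exp (s • Aᵀ)) y, z⟫)
              ∂ν := by
  intro t ht
  obtain ⟨a, b, ha, hab⟩ := exists_ofReal_mul_rpow_sub_le_lintegral_one_sub_cos ν
    (continuous_toEuclideanLin_mul_exp_smul A B)
    (fun _ hu => exists_toEuclideanLin_mul_exp_smul_ne_zero A B hrank ht hu) hC hα hc₀.le hcond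
  exact ⟨a, b, ha, fun y _ => hab y⟩

/-- Under the nondegeneracy condition on the Lévy measure and the Kalman rank condition,
for each `t > 0` there are `a_t > 0` and `b_t ∈ ℝ` with
`∫₀ᵗ ∫ (1 − cos⟨B*e^{sA*}y, z⟩) ν(dz) ds ≥ a_t |y|^α − b_t` for all `|y| ≥ 1`. -/
theorem lower_bound_for_levy_symbol
    (n d : ℕ) (ν : Measure (EuclideanSpace ℝ (Fin d)))
    (hν0 : ν {0} = 0)
    (hν2 : ∫⁻ y, ENNReal.ofReal (min 1 (‖y‖ ^ 2)) ∂ν < ⊤)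
    (C : ℝ) (hC : 0 < C) (α : ℝ) (hα : α ∈ Set.Ioo (0:ℝ) 2)
    (c₀ : ℝ) (hc₀ : 0 < c₀)
    (hcond : ∀ k : EuclideanSpace ℝ (Fin d), c₀ ≤ ‖k‖ →
      ENNReal.ofReal (C * ‖k‖ ^ α) ≤
        ∫⁻ z in {z | |⟪z, k⟫| ≤ 1}, ENNReal.ofReal (⟪z, k⟫ ^ 2) ∂ν)
    (A : Matrix (Fin n) (Fin n) ℝ) (B : Matrix (Fin n) (Fin d) ℝ)
    (hrank : (Matrix.of fun (i : Fin n) (jk : Fin n × Fin d) =>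
        (A ^ (jk.1 : ℕ) * B) i jk.2).rank = n) :
    ∀ t : ℝ, 0 < t → ∃ a b : ℝ, 0 < a ∧
      ∀ y : EuclideanSpace ℝ (Fin n), 1 ≤ ‖y‖ →
        ENNReal.ofReal (a * ‖y‖ ^ α - b) ≤
          ∫⁻ s in Set.Ioc (0:ℝ) t,
            ∫⁻ z, ENNReal.ofReal
              (1 - Real.cos ⟪Matrix.toEuclideanLin (Bᵀ * NormedSpace.exp (s • Aᵀ)) y, z⟫)
              ∂ν :=
  lower_bound_for_levy_symbol_general n d ν C hC α hα c₀ hc₀ hcond A B hrank
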